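/- Let α ∈ (0,1) and m ≥ 1. Then for all t ∈ [0,1], |∑_{k=0}^{2^m−1} τ^{1−α}_{1,2^m+k}(t)| ≤ c₁(α) · 2^{m(α−1)}, where c₁(α) = (2^α/Γ(2−α)) · (∑_{k≥1} |C_{(1−α)/2}(k)| + 2). -/

import Mathlib

open Set

/-- The function `τ^α_{1,2^m+k}`. -/
noncomputable def tau1 (α : ℝ) (m k : ℕ) (t : ℝ) : ℝ :=
  ((max (t - (k : ℝ) / 2 ^ m) 0) ^ α - 2 * (max (t - ((k : ℝ) + 0.5) / 2 ^ m) 0) ^ α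
    + (max (t - ((k : ℝ) + 1) / 2 ^ m) 0) ^ α) / Real.Gamma (1 + α)

/-- The covariance function of fractional Gaussian noise with Hurst index `H`. -/
noncomputable def fgnC (H t : ℝ) : ℝ :=
  (|t + 1| ^ (2 * H) - 2 * |t| ^ (2 * H) + |t - 1| ^ (2 * H)) / 2

/-- The constant `c₁(α)`. -/
noncomputable def c1 (α : ℝ) : ℝ :=
  (2 : ℝ) ^ α / Real.Gamma (2 - α) * ((∑' k : ℕ, |fgnC ((1 - α) / 2) ((k : ℝ) + 1)|) + 2)

/-!
With `β = 1 - α` and `u_k = 2^(m+1) t - 1 - 2k`, rescaling by `2^(m+1)` turns the `k`-th summand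
into `2^(-(m+1)β) / Γ(1+β)` times the central second difference of `x ↦ x₊^β` at `u_k`.
Where `x₊^β` is concave (`u ≥ 1`) this second difference is the drop of the unit increment
`v ↦ v₊^β - (v-1)₊^β`, which decreases from `1` on `[1, ∞)`; for `-1 ≤ u < 1` it is at most `2`,
and for `u < -1` it vanishes. A single bounded majorant `M` with
`|Δ²(u)| ≤ M(u - 1) - M(u + 1)` covers all three regimes, and since the `u_k` are spaced by `2`
the sum telescopes to at most `3`, whatever `t` and the number of terms.
-/

theorem ConcaveOn.antitoneOn_sub_sub {f : ℝ → ℝ} {a h : ℝ} (hf : ConcaveOn ℝ (Ici a) f)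
    (hh : 0 < h) : AntitoneOn (fun x => f x - f (x - h)) (Ici (a + h)) := by
  intro x hx y hy hxy
  simp only [mem_Ici] at hx hy
  show f y - f (y - h) ≤ f x - f (x - h)
  have mem : ∀ {z}, a ≤ z → z ∈ Ici a := id
  -- compare the slopes of `f` on `[y - h, y]`, `[x - h, y]` and `[x - h, x]`
  have h₁ := hf.neg.secant_mono (a := y) (mem (by linarith)) (mem (by linarith))
    (mem (by linarith)) (by linarith) (by linarith) (by linarith : x - h ≤ y - h)
  have h₂ := hf.neg.secant_mono (a := x - h) (mem (by linarith)) (mem (by linarith))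
    (mem (by linarith)) (by linarith) (by linarith) hxy
  simp only [Pi.neg_apply, neg_sub_neg, sub_sub_cancel] at h₁ h₂
  rw [show x - h - y = -(y - (x - h)) by ring, show y - h - y = -h by ring, div_neg, div_neg,
    neg_le_neg_iff] at h₁
  rw [← neg_sub (f y), ← neg_sub (f x), neg_div, neg_div, neg_le_neg_iff] at h₂
  rw [← div_le_div_iff_of_pos_right hh]
  exact h₁.trans h₂

noncomputable def truncPow (β x : ℝ) : ℝ := max x 0 ^ β

section truncPow

variable {β : ℝ}

theorem truncPow_nonneg (x : ℝ) : 0 ≤ truncPow β x :=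
  Real.rpow_nonneg (le_max_right _ _) _

theorem truncPow_of_nonneg {x : ℝ} (hx : 0 ≤ x) : truncPow β x = x ^ β := by
  rw [truncPow, max_eq_left hx]

theorem truncPow_of_nonpos (hβ : β ≠ 0) {x : ℝ} (hx : x ≤ 0) : truncPow β x = 0 := by
  rw [truncPow, max_eq_right hx, Real.zero_rpow hβ]

theorem truncPow_mul {c : ℝ} (hc : 0 ≤ c) (x : ℝ) :
    truncPow β (c * x) = c ^ β * truncPow β x := by
  rw [truncPow, truncPow, ← mul_zero c, ← mul_max_of_nonneg _ _ hc, mul_zero,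
    Real.mul_rpow hc (le_max_right _ _)]

theorem monotone_truncPow (hβ : 0 ≤ β) : Monotone (truncPow β) := fun _ _ hxy =>
  Real.rpow_le_rpow (le_max_right _ _) (max_le_max hxy le_rfl) hβ

theorem concaveOn_truncPow (hβ₀ : 0 ≤ β) (hβ₁ : β ≤ 1) : ConcaveOn ℝ (Ici 0) (truncPow β) :=
  (Real.concaveOn_rpow hβ₀ hβ₁).congr fun _ hx => (truncPow_of_nonneg hx).symm

noncomputable def truncPowIncr (β v : ℝ) : ℝ := truncPow β v - truncPow β (v - 1)

theorem truncPowIncr_nonneg (hβ : 0 ≤ β) (v : ℝ) : 0 ≤ truncPowIncr β v :=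
  sub_nonneg.2 (monotone_truncPow hβ (by linarith))

theorem antitoneOn_truncPowIncr (hβ₀ : 0 ≤ β) (hβ₁ : β ≤ 1) :
    AntitoneOn (truncPowIncr β) (Ici 1) := by
  unfold truncPowIncr
  simpa only [zero_add] using (concaveOn_truncPow hβ₀ hβ₁).antitoneOn_sub_sub one_pos

theorem truncPowIncr_one (hβ : β ≠ 0) : truncPowIncr β 1 = 1 := by
  rw [truncPowIncr, sub_self, truncPow_of_nonpos hβ le_rfl, truncPow_of_nonneg zero_le_one,
    Real.one_rpow, sub_zero]

theorem truncPowIncr_le_one (hβ₀ : 0 < β) (hβ₁ : β ≤ 1) {v : ℝ} (hv : 1 ≤ v) :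
    truncPowIncr β v ≤ 1 :=
  truncPowIncr_one hβ₀.ne' ▸ antitoneOn_truncPowIncr hβ₀.le hβ₁ self_mem_Ici hv hv

end truncPow

def centralSecondDiff (f : ℝ → ℝ) (u : ℝ) : ℝ := f (u + 1) - 2 * f u + f (u - 1)

/-- A bounded function whose differences over steps of length `2` dominate
`|centralSecondDiff (truncPow β) ·|`: the increment of `truncPow β` where it is concave, plus a jump
of `2` paying for the single point near the kink at `0`. -/
noncomputable def secondDiffMajorant (β v : ℝ) : ℝ :=
  truncPowIncr β (max v 1) + if v < 0 then 2 else 0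

section secondDiff

variable {β : ℝ}

theorem secondDiffMajorant_nonneg (hβ : 0 ≤ β) (v : ℝ) : 0 ≤ secondDiffMajorant β v := by
  unfold secondDiffMajorant
  have := truncPowIncr_nonneg hβ (max v 1)
  split_ifs <;> linarith

theorem secondDiffMajorant_le_three (hβ₀ : 0 < β) (hβ₁ : β ≤ 1) (v : ℝ) :
    secondDiffMajorant β v ≤ 3 := by
  unfold secondDiffMajorant
  have := truncPowIncr_le_one hβ₀ hβ₁ (le_max_right v 1)
  split_ifs <;> linarith

theorem abs_centralSecondDiff_truncPow_le (hβ₀ : 0 < β) (hβ₁ : β ≤ 1) (u : ℝ) :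
    |centralSecondDiff (truncPow β) u| ≤
      secondDiffMajorant β (u - 1) - secondDiffMajorant β (u + 1) := by
  have vanish : ∀ {x : ℝ}, x ≤ 0 → truncPow β x = 0 := truncPow_of_nonpos hβ₀.ne'
  unfold centralSecondDiff secondDiffMajorant
  rcases lt_or_ge u (-1) with hu | hu
  · rw [vanish (by linarith), vanish (by linarith), vanish (by linarith),
      max_eq_right (by linarith), max_eq_right (by linarith), if_pos (by linarith),
      if_pos (by linarith)]
    simp
  rcases lt_or_ge u 1 with hu' | hu'
  · have h₁ : truncPow β (u + 1) ≤ 2 := by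
      calc truncPow β (u + 1) ≤ truncPow β 2 := monotone_truncPow hβ₀.le (by linarith)
        _ = (2 : ℝ) ^ β := truncPow_of_nonneg zero_le_two
        _ ≤ (2 : ℝ) ^ (1 : ℝ) := Real.rpow_le_rpow_of_exponent_le one_le_two hβ₁
        _ = 2 := Real.rpow_one 2
    have h₂ : truncPow β u ≤ 1 := by
      calc truncPow β u ≤ truncPow β 1 := monotone_truncPow hβ₀.le hu'.le
        _ = 1 := by rw [truncPow_of_nonneg zero_le_one, Real.one_rpow]
    have h₃ := truncPowIncr_le_one hβ₀ hβ₁ (le_max_right (u + 1) 1)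
    have h₄ := truncPow_nonneg (β := β) (u + 1)
    have h₅ := truncPow_nonneg (β := β) u
    rw [vanish (x := u - 1) (by linarith), max_eq_right (by linarith), truncPowIncr_one hβ₀.ne',
      if_pos (by linarith), if_neg (by linarith), abs_le]
    constructor <;> linarith
  · have anti := antitoneOn_truncPowIncr hβ₀.le hβ₁
    have mem : ∀ {x : ℝ}, 1 ≤ x → x ∈ Ici 1 := id
    have h₁ : truncPowIncr β (u + 1) ≤ truncPowIncr β u := anti (mem hu') (mem (by linarith))
      (by linarith)
    have h₂ : truncPowIncr β u ≤ truncPowIncr β (max (u - 1) 1) :=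
      anti (mem (le_max_right _ _)) (mem hu') (max_le (by linarith) hu')
    have hsd : truncPow β (u + 1) - 2 * truncPow β u + truncPow β (u - 1) =
        truncPowIncr β (u + 1) - truncPowIncr β u := by
      rw [truncPowIncr, truncPowIncr, add_sub_cancel_right]; ring
    rw [hsd, abs_of_nonpos (by linarith), max_eq_left (by linarith : 1 ≤ u + 1),
      if_neg (by linarith), if_neg (by linarith)]
    linarith

end secondDiff

theorem sum_range_le_sub_of_le_sub_shift {φ M : ℝ → ℝ} (h : ∀ u, φ u ≤ M (u - 1) - M (u + 1))
    (x : ℝ) (N : ℕ) : ∑ k ∈ Finset.range N, φ (x - 2 * k) ≤ M (x - 2 * N + 1) - M (x + 1) := by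
  have step : ∀ k : ℕ, φ (x - 2 * k) ≤ M (x - 2 * ↑(k + 1) + 1) - M (x - 2 * k + 1) := by
    intro k
    convert h (x - 2 * k) using 3; push_cast; ring
  calc ∑ k ∈ Finset.range N, φ (x - 2 * k)
      ≤ ∑ k ∈ Finset.range N, (M (x - 2 * ↑(k + 1) + 1) - M (x - 2 * k + 1)) :=
        Finset.sum_le_sum fun k _ => step k
    _ = M (x - 2 * N + 1) - M (x + 1) := by
      rw [Finset.sum_range_sub (fun k : ℕ => M (x - 2 * k + 1))]
      simp

theorem sum_abs_centralSecondDiff_truncPow_le {β : ℝ} (hβ₀ : 0 < β) (hβ₁ : β ≤ 1)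
    (x : ℝ) (N : ℕ) :
    ∑ k ∈ Finset.range N, |centralSecondDiff (truncPow β) (x - 2 * k)| ≤ 3 := by
  have := sum_range_le_sub_of_le_sub_shift (abs_centralSecondDiff_truncPow_le hβ₀ hβ₁) x N
  linarith [secondDiffMajorant_le_three hβ₀ hβ₁ (x - 2 * N + 1),
    secondDiffMajorant_nonneg hβ₀.le (x + 1)]

theorem tau1_eq_mul_centralSecondDiff (β : ℝ) (m k : ℕ) (t : ℝ) :
    tau1 β m k t = ((2 : ℝ) ^ (m + 1))⁻¹ ^ β / Real.Gamma (1 + β) *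
      centralSecondDiff (truncPow β) (2 ^ (m + 1) * t - 1 - 2 * k) := by
  have hc : (0 : ℝ) ≤ ((2 : ℝ) ^ (m + 1))⁻¹ := by positivity
  have rescale : ∀ x : ℝ, max (t - x / 2 ^ m) 0 ^ β =
      ((2 : ℝ) ^ (m + 1))⁻¹ ^ β * truncPow β (2 ^ (m + 1) * t - 2 * x) := by
    intro x
    rw [← truncPow_mul hc, truncPow]
    congr 2
    field_simp
    ring
  rw [tau1, rescale, rescale, rescale, centralSecondDiff]
  ring_nf

theorem inv_two_pow_rpow_div_gamma_mul_three_le_c1 {α : ℝ} (hα : α < 1) (m : ℕ) :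
    ((2 : ℝ) ^ (m + 1))⁻¹ ^ (1 - α) / Real.Gamma (1 + (1 - α)) * 3 ≤
      c1 α * (2 : ℝ) ^ ((m : ℝ) * (α - 1)) := by
  have hΓ : 0 < Real.Gamma (2 - α) := Real.Gamma_pos_of_pos (by linarith)
  have hscale : ((2 : ℝ) ^ (m + 1))⁻¹ ^ (1 - α) = 2 ^ α / 2 * 2 ^ ((m : ℝ) * (α - 1)) := by
    rw [← Real.rpow_natCast, ← Real.rpow_neg zero_le_two, ← Real.rpow_mul zero_le_two,
      ← Real.rpow_sub_one two_ne_zero, ← Real.rpow_add two_pos]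
    push_cast
    ring_nf
  have hS : 0 ≤ ∑' k : ℕ, |fgnC ((1 - α) / 2) ((k : ℝ) + 1)| := tsum_nonneg fun _ => abs_nonneg _
  have hA : 0 ≤ (2 : ℝ) ^ α * 2 ^ ((m : ℝ) * (α - 1)) / Real.Gamma (2 - α) := by positivity
  rw [hscale, c1, show 1 + (1 - α) = 2 - α by ring]
  calc _ = (2 : ℝ) ^ α * 2 ^ ((m : ℝ) * (α - 1)) / Real.Gamma (2 - α) * (3 / 2) := by ring
    _ ≤ (2 : ℝ) ^ α * 2 ^ ((m : ℝ) * (α - 1)) / Real.Gamma (2 - α) *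
        ((∑' k : ℕ, |fgnC ((1 - α) / 2) ((k : ℝ) + 1)|) + 2) := by gcongr; linarith
    _ = _ := by ring

theorem sum_tau1_uniform_bound_general (α : ℝ) (hα : α ∈ Set.Ioo (0 : ℝ) 1) (m : ℕ) (t : ℝ) :
    |∑ k ∈ Finset.range (2 ^ m), tau1 (1 - α) m k t| ≤ c1 α * (2 : ℝ) ^ ((m : ℝ) * (α - 1)) := by
  obtain ⟨hα₀, hα₁⟩ := hα
  set c := ((2 : ℝ) ^ (m + 1))⁻¹ ^ (1 - α) / Real.Gamma (1 + (1 - α))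
  have hc : 0 ≤ c := div_nonneg (by positivity) (Real.Gamma_pos_of_pos (by linarith)).le
  calc |∑ k ∈ Finset.range (2 ^ m), tau1 (1 - α) m k t|
      = c * |∑ k ∈ Finset.range (2 ^ m),
          centralSecondDiff (truncPow (1 - α)) (2 ^ (m + 1) * t - 1 - 2 * k)| := by
        rw [← abs_of_nonneg hc, ← abs_mul, Finset.mul_sum]
        simp_rw [tau1_eq_mul_centralSecondDiff, c]
    _ ≤ c * 3 := by
        gcongr
        exact (Finset.abs_sum_le_sum_abs _ _).trans
          (sum_abs_centralSecondDiff_truncPow_le (by linarith) (by linarith) _ _)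
    _ ≤ c1 α * (2 : ℝ) ^ ((m : ℝ) * (α - 1)) := inv_two_pow_rpow_div_gamma_mul_three_le_c1 hα₁ m

theorem sum_tau1_uniform_bound (α : ℝ) (hα : α ∈ Set.Ioo (0 : ℝ) 1) (m : ℕ) (hm : 1 ≤ m)
    (t : ℝ) (ht : t ∈ Set.Icc (0 : ℝ) 1) :
    |∑ k ∈ Finset.range (2 ^ m), tau1 (1 - α) m k t| ≤ c1 α * (2 : ℝ) ^ ((m : ℝ) * (α - 1)) :=
  sum_tau1_uniform_bound_general α hα m t
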